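/- Let G be a group and A a finite dimensional k-algebra. Two G-gradings A^{(θ_1)} and A^{(θ_2)} on A associated to bialgebra maps θ_1, θ_2 : a(A) → k[G] are isomorphic if and only if there exists an invertible group-like element g of the finite dual a(A)^o such that θ_2 = g ⋆ θ_1 ⋆ g^{-1} in the convolution algebra Hom(a(A), k[G]). -/

import Mathlib

open TensorProduct

noncomputable section

variable (k : Type) [Field k]

/-- The relations defining the quantum symmetry semigroup `a(A)` of a finite dimensional
algebra `A` with basis `e` (with `e 0 = 1`), in terms of the structure constants
`τ i j s = e.repr (e i * e j) s`. -/
inductive ARel {A : Type} [Ring A] [Algebra k A] {n : ℕ} [NeZero n]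
    (e : Module.Basis (Fin n) k A) :
    FreeAlgebra k (Fin n × Fin n) → FreeAlgebra k (Fin n × Fin n) → Prop
  | mul (a i j : Fin n) :
      ARel e (∑ u, e.repr (e i * e j) u • FreeAlgebra.ι k (a, u))
        (∑ s, ∑ t, e.repr (e s * e t) a • (FreeAlgebra.ι k (s, i) * FreeAlgebra.ι k (t, j)))
  | unit (a : Fin n) :
      ARel e (FreeAlgebra.ι k (a, (0 : Fin n))) (if a = 0 then 1 else 0)

/-- The quantum symmetry semigroup `a(A)`. -/
abbrev aA {A : Type} [Ring A] [Algebra k A] {n : ℕ} [NeZero n] (e : Module.Basis (Fin n) k A) :=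
  RingQuot (ARel k e)

/-- The generators `x_{s i}` of `a(A)`. -/
def xg {A : Type} [Ring A] [Algebra k A] {n : ℕ} [NeZero n] (e : Module.Basis (Fin n) k A)
    (s i : Fin n) : aA k e :=
  RingQuot.mkAlgHom k (ARel k e) (FreeAlgebra.ι k (s, i))

/-- The canonical map `η_A : A → A ⊗ a(A)`, `e i ↦ ∑ s, e s ⊗ x_{s i}`, as a linear map. -/
def etaA {A : Type} [Ring A] [Algebra k A] {n : ℕ} [NeZero n] (e : Module.Basis (Fin n) k A) :
    A →ₗ[k] A ⊗[k] aA k e :=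
  (e.constr k) fun i => ∑ s, e s ⊗ₜ[k] xg k e s i


/-- The comultiplication of the group bialgebra `k[G]`, determined by `Δ(g) = g ⊗ g`. -/
def gComul (G : Type) [Group G] :
    MonoidAlgebra k G →ₐ[k] MonoidAlgebra k G ⊗[k] MonoidAlgebra k G :=
  MonoidAlgebra.lift k _ G
    { toFun := fun g => MonoidAlgebra.of k G g ⊗ₜ[k] MonoidAlgebra.of k G g
      map_one' := by simp [Algebra.TensorProduct.one_def, MonoidAlgebra.one_def]
      map_mul' := by intro g h; simp [Algebra.TensorProduct.tmul_mul_tmul] }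

/-- The counit of the group bialgebra `k[G]`, determined by `ε(g) = 1`. -/
def gCounit (G : Type) [Group G] : MonoidAlgebra k G →ₐ[k] k :=
  MonoidAlgebra.lift k k G 1

variable {A : Type} [Ring A] [Algebra k A] {n : ℕ} [NeZero n]

/-- The convolution product on `Hom_Alg(a(A), k) = G(a(A)^o)`, defined via the
comultiplication `Δ` of `a(A)`. -/
def conv (e : Module.Basis (Fin n) k A) (Δ : aA k e →ₐ[k] aA k e ⊗[k] aA k e)
    (θ₁ θ₂ : aA k e →ₐ[k] k) : aA k e →ₐ[k] k :=
  (Algebra.TensorProduct.lmul' k (S := k)).comp ((Algebra.TensorProduct.map θ₁ θ₂).comp Δ)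

/-- The convolution product on the algebra `Hom(a(A), k[G])` of linear maps. -/
def lconv (e : Module.Basis (Fin n) k A) (Δ : aA k e →ₐ[k] aA k e ⊗[k] aA k e)
    {L : Type} [Ring L] [Algebra k L]
    (f h : aA k e →ₗ[k] L) : aA k e →ₗ[k] L :=
  (LinearMap.mul' k L).comp ((TensorProduct.map f h).comp Δ.toLinearMap)

/-- The embedding `a(A)^o ⊆ Hom(a(A), k) → Hom(a(A), k[G])` induced by `k ⊆ k[G]`. -/
def emb (e : Module.Basis (Fin n) k A) {L : Type} [Ring L] [Algebra k L]
    (g : aA k e →ₐ[k] k) : aA k e →ₗ[k] L :=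
  (Algebra.linearMap k L).comp g.toLinearMap

section Aux
variable {k : Type} [Field k] {A : Type} [Ring A] [Algebra k A] {n : ℕ} [NeZero n]

lemma etaA_basis (e : Module.Basis (Fin n) k A) (i : Fin n) :
    etaA k e (e i) = ∑ s, e s ⊗ₜ[k] xg k e s i :=
  Module.Basis.constr_basis e k _ i

lemma tensor_coeff_eq (e : Module.Basis (Fin n) k A) {M : Type} [AddCommMonoid M] [Module k M]
    {v w : Fin n → M} (h : (∑ s, e s ⊗ₜ[k] v s) = ∑ s, e s ⊗ₜ[k] w s) (t : Fin n) :
    v t = w t := by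
  have h2 := congrArg ((TensorProduct.lid k M).toLinearMap.comp
    (TensorProduct.map (e.coord t) LinearMap.id)) h
  simp only [map_sum, LinearMap.comp_apply, TensorProduct.map_tmul, LinearMap.id_coe, id_eq,
    LinearEquiv.coe_coe, TensorProduct.lid_tmul, Module.Basis.coord_apply, Module.Basis.repr_self_apply] at h2
  simpa [ite_smul] using h2

lemma xg_zero (e : Module.Basis (Fin n) k A) (t : Fin n) :
    xg k e t 0 = if t = 0 then 1 else 0 := by
  have h := RingQuot.mkAlgHom_rel k (ARel.unit (e := e) t)
  unfold xg
  rw [h]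
  split <;> simp

lemma xg_rel_mul (e : Module.Basis (Fin n) k A) (a i j : Fin n) :
    (∑ u, e.repr (e i * e j) u • xg k e a u)
      = ∑ s, ∑ t, e.repr (e s * e t) a • (xg k e s i * xg k e t j) := by
  have h := RingQuot.mkAlgHom_rel k (ARel.mul (e := e) a i j)
  simpa [xg, map_sum, map_smul, map_mul] using h

lemma aA_algHom_ext (e : Module.Basis (Fin n) k A) {L : Type} [Semiring L] [Algebra k L]
    {f f' : aA k e →ₐ[k] L} (h : ∀ s i, f (xg k e s i) = f' (xg k e s i)) : f = f' := by
  apply RingQuot.ringQuot_ext'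
  apply FreeAlgebra.hom_ext
  funext p
  simpa [xg] using h p.1 p.2

lemma conv_xg (e : Module.Basis (Fin n) k A) (Δ : aA k e →ₐ[k] aA k e ⊗[k] aA k e)
    (hΔ : ∀ i j, Δ (xg k e i j) = ∑ s, xg k e i s ⊗ₜ[k] xg k e s j)
    (g g' : aA k e →ₐ[k] k) (a i : Fin n) :
    conv k e Δ g g' (xg k e a i) = ∑ u, g (xg k e a u) * g' (xg k e u i) := by
  simp [conv, hΔ, map_sum]

lemma lconv_xg (e : Module.Basis (Fin n) k A) (Δ : aA k e →ₐ[k] aA k e ⊗[k] aA k e)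
    (hΔ : ∀ i j, Δ (xg k e i j) = ∑ s, xg k e i s ⊗ₜ[k] xg k e s j)
    {L : Type} [Ring L] [Algebra k L] (f h : aA k e →ₗ[k] L) (a i : Fin n) :
    lconv k e Δ f h (xg k e a i) = ∑ u, f (xg k e a u) * h (xg k e u i) := by
  simp [lconv, hΔ, map_sum]

lemma emb_apply (e : Module.Basis (Fin n) k A) {L : Type} [Ring L] [Algebra k L]
    (g : aA k e →ₐ[k] k) (z : aA k e) : emb k e g z = algebraMap k L (g z) := rfl

end Aux

section Aux2
set_option linter.unusedSectionVars false
variable {k : Type} [Field k] {A : Type} [Ring A] [Algebra k A] {n : ℕ} [NeZero n]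

/-- The algebra map `a(A) → k` attached to an algebra endomorphism `w` of `A`,
sending `x_{s i}` to the matrix coefficient `e.repr (w (e i)) s`. -/
def gOf (e : Module.Basis (Fin n) k A) (he : e 0 = 1) (w : A →ₐ[k] A) : aA k e →ₐ[k] k :=
  RingQuot.liftAlgHom k ⟨FreeAlgebra.lift k fun p => e.repr (w (e p.2)) p.1, by
    intro x y h
    induction h with
    | mul a i j =>
      simp only [map_sum, map_smul, map_mul, FreeAlgebra.lift_ι_apply, smul_eq_mul]
      have h1 : (∑ u, e.repr (e i * e j) u * e.repr (w (e u)) a)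
          = e.repr (w (e i * e j)) a := by
        conv_rhs => rw [← Module.Basis.sum_repr e (e i * e j)]
        rw [map_sum, map_sum]
        simp [map_sum, map_smul, Finset.sum_apply', smul_eq_mul]
      rw [h1, map_mul]
      conv_lhs => rw [← Module.Basis.sum_repr e (w (e i)), ← Module.Basis.sum_repr e (w (e j)),
        Finset.sum_mul_sum]
      simp only [smul_mul_assoc, mul_smul_comm, smul_smul, map_sum, map_smul,
        Finset.sum_apply', Finsupp.smul_apply, smul_eq_mul]
      exact Finset.sum_congr rfl fun s _ => Finset.sum_congr rfl fun t _ => by ring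
    | unit a =>
      simp only [FreeAlgebra.lift_ι_apply, he, map_one]
      rw [show (1 : A) = e 0 from he.symm, Module.Basis.repr_self_apply]
      split
      · simp_all
      · simp_all [eq_comm] ⟩

lemma gOf_xg (e : Module.Basis (Fin n) k A) (he : e 0 = 1) (w : A →ₐ[k] A) (s i : Fin n) :
    gOf e he w (xg k e s i) = e.repr (w (e i)) s := by
  unfold gOf xg
  rw [RingQuot.liftAlgHom_mkAlgHom_apply]
  simp

end Aux2

section Aux3
set_option linter.unusedSectionVars false
variable {k : Type} [Field k] {A : Type} [Ring A] [Algebra k A] {n : ℕ} [NeZero n]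

/-- The linear endomorphism of `A` attached to an algebra map `g : a(A) → k`. -/
def WOfL (e : Module.Basis (Fin n) k A) (g : aA k e →ₐ[k] k) : A →ₗ[k] A :=
  e.constr k fun i => ∑ t, g (xg k e t i) • e t

lemma WOfL_basis (e : Module.Basis (Fin n) k A) (g : aA k e →ₐ[k] k) (i : Fin n) :
    WOfL e g (e i) = ∑ t, g (xg k e t i) • e t :=
  Module.Basis.constr_basis e k _ i

lemma WOfL_one (e : Module.Basis (Fin n) k A) (he : e 0 = 1) (g : aA k e →ₐ[k] k) :
    WOfL e g 1 = 1 := by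
  rw [show (1 : A) = e 0 from he.symm, WOfL_basis]
  simp only [xg_zero, apply_ite g, map_one, map_zero, ite_smul, one_smul, zero_smul]
  simp [he]

lemma WOfL_basis_mul (e : Module.Basis (Fin n) k A) (g : aA k e →ₐ[k] k) (i j : Fin n) :
    WOfL e g (e i * e j) = WOfL e g (e i) * WOfL e g (e j) := by
  apply e.ext_elem
  intro a
  have hg := congrArg g (xg_rel_mul e a i j)
  simp only [map_sum, map_smul, smul_eq_mul, map_mul] at hg
  have h1 : WOfL e g (e i * e j) = ∑ u, e.repr (e i * e j) u • WOfL e g (e u) := by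
    conv_lhs => rw [← Module.Basis.sum_repr e (e i * e j)]
    rw [map_sum]
    simp only [map_smul]
  rw [h1]
  simp only [WOfL_basis]
  conv_rhs => rw [Finset.sum_mul_sum]
  simp only [smul_mul_assoc, mul_smul_comm, smul_smul, map_sum, map_smul,
    Finset.sum_apply', Finsupp.smul_apply, smul_eq_mul, Module.Basis.repr_self_apply,
    mul_ite, mul_one, mul_zero, Finset.sum_ite_eq', Finset.mem_univ, if_true]
  rw [hg]
  refine Finset.sum_congr rfl fun s _ => Finset.sum_congr rfl fun t _ => ?_
  ring_nf

lemma WOfL_mul (e : Module.Basis (Fin n) k A) (g : aA k e →ₐ[k] k) (x y : A) :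
    WOfL e g (x * y) = WOfL e g x * WOfL e g y := by
  have hbil : (LinearMap.mul k A).compr₂ (WOfL e g)
      = (LinearMap.mul k A).compl₁₂ (WOfL e g) (WOfL e g) :=
    LinearMap.ext_basis e e fun i j => by
      simp [LinearMap.compr₂_apply, LinearMap.compl₁₂_apply, WOfL_basis_mul]
  have := LinearMap.congr_fun₂ hbil x y
  simpa [LinearMap.compr₂_apply, LinearMap.compl₁₂_apply] using this

/-- The algebra endomorphism of `A` attached to an algebra map `g : a(A) → k`. -/
def WOf (e : Module.Basis (Fin n) k A) (he : e 0 = 1) (g : aA k e →ₐ[k] k) : A →ₐ[k] A :=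
  AlgHom.ofLinearMap (WOfL e g) (WOfL_one e he g) (WOfL_mul e g)

lemma WOf_apply (e : Module.Basis (Fin n) k A) (he : e 0 = 1) (g : aA k e →ₐ[k] k) (x : A) :
    WOf e he g x = WOfL e g x := rfl

lemma WOfL_comp (e : Module.Basis (Fin n) k A) (g g' : aA k e →ₐ[k] k)
    (hgg' : ∀ a i, (∑ u, g (xg k e a u) * g' (xg k e u i)) = if a = i then 1 else 0)
    (x : A) : WOfL e g (WOfL e g' x) = x := by
  have : (WOfL e g).comp (WOfL e g') = LinearMap.id := by
    apply Module.Basis.ext e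
    intro i
    simp only [LinearMap.comp_apply, WOfL_basis, map_sum, map_smul, LinearMap.id_coe, id_eq]
    simp only [WOfL_basis, Finset.smul_sum, smul_smul]
    rw [Finset.sum_comm]
    simp only [← Finset.sum_smul]
    have : ∀ t, (∑ u, g' (xg k e u i) * g (xg k e t u)) = if t = i then 1 else 0 := by
      intro t
      rw [← hgg' t i]
      exact Finset.sum_congr rfl fun u _ => mul_comm _ _
    simp only [this, ite_smul, one_smul, zero_smul]
    simp
  exact LinearMap.congr_fun this x

end Aux3

section Aux4
set_option linter.unusedSectionVars false
variable {k : Type} [Field k] {G : Type} [Group G]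

example (f : MonoidAlgebra k G) (σ : G) : k := f.coeff σ
example (σ : G) : MonoidAlgebra k G →ₗ[k] k :=
  (Finsupp.lapply σ).comp (MonoidAlgebra.coeffLinearEquiv k).toLinearMap

lemma gCounit_apply' (f : MonoidAlgebra k G) : gCounit k G f = ∑ σ ∈ f.coeff.support, f.coeff σ := by
  simp [gCounit, MonoidAlgebra.lift_apply, Finsupp.sum]

lemma gComul_apply' (f : MonoidAlgebra k G) :
    gComul k G f = ∑ σ ∈ f.coeff.support,
      f.coeff σ • (MonoidAlgebra.of k G σ ⊗ₜ[k] MonoidAlgebra.of k G σ) := by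
  rw [show gComul k G f = Finsupp.sum f.coeff fun a b => b • (MonoidAlgebra.of k G a ⊗ₜ[k] MonoidAlgebra.of k G a) from MonoidAlgebra.lift_apply _ f]
  rfl

lemma monoidAlgebra_decomp (f : MonoidAlgebra k G) {S : Finset G} (hS : f.coeff.support ⊆ S) :
    (∑ σ ∈ S, f.coeff σ • MonoidAlgebra.of k G σ) = f := by
  classical
  rw [← Finset.sum_subset hS (fun σ _ hσ => by
    simp [Finsupp.notMem_support_iff.mp hσ])]
  conv_rhs => rw [← MonoidAlgebra.sum_coeff_single f]
  rw [Finsupp.sum]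
  refine Finset.sum_congr rfl fun σ _ => ?_
  simp [MonoidAlgebra.of_apply, Finsupp.smul_single]

lemma counit_sum (f : MonoidAlgebra k G) {S : Finset G} (hS : f.coeff.support ⊆ S) :
    (∑ σ ∈ S, f.coeff σ) = gCounit k G f := by
  classical
  rw [gCounit_apply']
  exact (Finset.sum_subset hS (fun σ _ hσ => Finsupp.notMem_support_iff.mp hσ)).symm

end Aux4

section Aux5
set_option linter.unusedSectionVars false
variable {k : Type} [Field k] {A : Type} [Ring A] [Algebra k A] {n : ℕ} [NeZero n]
  {G : Type} [Group G]

/-- Pointwise form of the comultiplicativity of `θ` on generators. -/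
lemma theta_pointwise (e : Module.Basis (Fin n) k A) (Δ : aA k e →ₐ[k] aA k e ⊗[k] aA k e)
    (hΔ : ∀ i j, Δ (xg k e i j) = ∑ s, xg k e i s ⊗ₜ[k] xg k e s j)
    (θ : aA k e →ₐ[k] MonoidAlgebra k G)
    (hc : ∀ z, TensorProduct.map θ.toLinearMap θ.toLinearMap (Δ z) = gComul k G (θ z))
    (t i : Fin n) (σ : G) :
    (∑ s, (θ (xg k e s i)).coeff σ • θ (xg k e t s))
      = (θ (xg k e t i)).coeff σ • MonoidAlgebra.of k G σ := by
  classical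
  have h := hc (xg k e t i)
  rw [hΔ t i, gComul_apply'] at h
  have h2 := congrArg ((TensorProduct.rid k (MonoidAlgebra k G)).toLinearMap.comp
      (TensorProduct.map LinearMap.id ((Finsupp.lapply σ).comp
        (MonoidAlgebra.coeffLinearEquiv k).toLinearMap))) h
  simp only [map_sum, map_smul, LinearMap.comp_apply, TensorProduct.map_tmul,
    LinearMap.id_coe, id_eq, LinearEquiv.coe_coe, TensorProduct.rid_tmul,
    Finsupp.lapply_apply, AlgHom.toLinearMap_apply, LinearMap.comp_apply,
      MonoidAlgebra.coeffLinearEquiv, MonoidAlgebra.coeff_sum, MonoidAlgebra.coeff_smul] at h2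
  change ∑ x, (θ (xg k e x i)).coeff σ • θ (xg k e t x) = ∑ x ∈ (θ (xg k e t i)).coeff.support,
    (θ (xg k e t i)).coeff x • ((MonoidAlgebra.of k G) x).coeff σ • (MonoidAlgebra.of k G) x at h2
  rw [h2]
  have hval : ∀ τ : G, (MonoidAlgebra.of k G τ).coeff σ = if τ = σ then (1 : k) else 0 := by
    intro τ; simp [MonoidAlgebra.of_apply, MonoidAlgebra.coeff_single_apply, Finsupp.single_apply]
  simp only [hval, ite_smul, one_smul, zero_smul, smul_ite, smul_zero]
  rw [Finset.sum_ite_eq' (θ (xg k e t i)).coeff.support σ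
    (fun τ => (θ (xg k e t i)).coeff τ • MonoidAlgebra.of k G τ)]
  split
  · rfl
  · next hσ => simp [Finsupp.notMem_support_iff.mp hσ]

/-- `map id θ (η x) = x ⊗ σ` in terms of coordinates. -/
lemma mem_grading_iff (e : Module.Basis (Fin n) k A) (θ : aA k e →ₐ[k] MonoidAlgebra k G)
    (x : A) (σ : G) :
    TensorProduct.map LinearMap.id θ.toLinearMap (etaA k e x)
        = x ⊗ₜ[k] MonoidAlgebra.of k G σ
      ↔ ∀ s, (∑ i, e.repr x i • θ (xg k e s i))
          = e.repr x s • MonoidAlgebra.of k G σ := by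
  classical
  have hx : TensorProduct.map LinearMap.id θ.toLinearMap (etaA k e x)
      = ∑ s, e s ⊗ₜ[k] (∑ i, e.repr x i • θ (xg k e s i)) := by
    conv_lhs => rw [← Module.Basis.sum_repr e x]
    simp only [map_sum, map_smul, etaA_basis, TensorProduct.map_tmul, LinearMap.id_coe,
      id_eq, AlgHom.toLinearMap_apply, Finset.smul_sum, TensorProduct.tmul_sum,
      TensorProduct.tmul_smul]
    rw [Finset.sum_comm]
  have hx2 : x ⊗ₜ[k] MonoidAlgebra.of k G σ
      = ∑ s, e s ⊗ₜ[k] (e.repr x s • MonoidAlgebra.of k G σ) := by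
    conv_lhs => rw [← Module.Basis.sum_repr e x]
    rw [TensorProduct.sum_tmul]
    simp only [TensorProduct.smul_tmul]
  rw [hx, hx2]
  constructor
  · intro h s; exact tensor_coeff_eq e h s
  · intro h; exact Finset.sum_congr rfl fun s _ => by rw [h s]

end Aux5

section Aux6
set_option linter.unusedSectionVars false
variable {k : Type} [Field k] {A : Type} [Ring A] [Algebra k A] {n : ℕ} [NeZero n]

/-- `g ⋆ θ ⋆ g'` realized as an algebra map, using centrality of scalars. -/
def Psi (e : Module.Basis (Fin n) k A) (Δ : aA k e →ₐ[k] aA k e ⊗[k] aA k e)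
    {L : Type} [Ring L] [Algebra k L]
    (g g' : aA k e →ₐ[k] k) (θ : aA k e →ₐ[k] L) : aA k e →ₐ[k] L :=
  (((Algebra.TensorProduct.rid k k L).toAlgHom.comp
    (Algebra.TensorProduct.lid k (L ⊗[k] k)).toAlgHom).comp
      ((Algebra.TensorProduct.map g (Algebra.TensorProduct.map θ g')).comp
        ((Algebra.TensorProduct.map (AlgHom.id k (aA k e)) Δ).comp Δ)))

lemma Psi_apply (e : Module.Basis (Fin n) k A) (Δ : aA k e →ₐ[k] aA k e ⊗[k] aA k e)
    {L : Type} [Ring L] [Algebra k L]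
    (g g' : aA k e →ₐ[k] k) (θ : aA k e →ₐ[k] L) (z : aA k e) :
    Psi e Δ g g' θ z
      = (Algebra.TensorProduct.rid k k L) ((Algebra.TensorProduct.lid k (L ⊗[k] k))
          ((Algebra.TensorProduct.map g (Algebra.TensorProduct.map θ g'))
            ((Algebra.TensorProduct.map (AlgHom.id k (aA k e)) Δ) (Δ z)))) := rfl

lemma Psi_xg (e : Module.Basis (Fin n) k A) (Δ : aA k e →ₐ[k] aA k e ⊗[k] aA k e)
    (hΔ : ∀ i j, Δ (xg k e i j) = ∑ s, xg k e i s ⊗ₜ[k] xg k e s j)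
    {L : Type} [Ring L] [Algebra k L]
    (g g' : aA k e →ₐ[k] k) (θ : aA k e →ₐ[k] L) (t i : Fin n) :
    Psi e Δ g g' θ (xg k e t i)
      = ∑ u, ∑ v, (g (xg k e t u) * g' (xg k e v i)) • θ (xg k e u v) := by
  rw [Psi_apply, hΔ]
  simp only [map_sum, Algebra.TensorProduct.map_tmul, AlgHom.coe_id, id_eq, hΔ,
    TensorProduct.tmul_sum, Algebra.TensorProduct.lid_tmul, Algebra.TensorProduct.rid_tmul,
    Finset.smul_sum, map_smul, smul_smul]

lemma claimA (e : Module.Basis (Fin n) k A) (Δ : aA k e →ₐ[k] aA k e ⊗[k] aA k e)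
    {L : Type} [Ring L] [Algebra k L]
    (g g' : aA k e →ₐ[k] k) (θ : aA k e →ₐ[k] L) :
    lconv k e Δ (emb k e g) (lconv k e Δ θ.toLinearMap (emb k e g'))
      = (Psi e Δ g g' θ).toLinearMap := by
  have h1 : ∀ v : aA k e ⊗[k] aA k e,
      LinearMap.mul' k L (TensorProduct.map θ.toLinearMap (emb k e g') v)
        = (Algebra.TensorProduct.rid k k L) ((Algebra.TensorProduct.map θ g') v) := by
    intro v
    induction v using TensorProduct.induction_on with
    | zero => simp
    | tmul a b =>
      simp only [TensorProduct.map_tmul, LinearMap.mul'_apply, emb_apply,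
        AlgHom.toLinearMap_apply, Algebra.TensorProduct.map_tmul,
        Algebra.TensorProduct.rid_tmul]
      rw [← Algebra.commutes (g' b) (θ a), ← Algebra.smul_def]
    | add x y hx hy => simp only [map_add, hx, hy]
  have h2 : ∀ v : aA k e ⊗[k] aA k e,
      LinearMap.mul' k L (TensorProduct.map (emb k e g)
          (lconv k e Δ θ.toLinearMap (emb k e g')) v)
        = (Algebra.TensorProduct.rid k k L) ((Algebra.TensorProduct.lid k (L ⊗[k] k))
            ((Algebra.TensorProduct.map g (Algebra.TensorProduct.map θ g'))
              ((Algebra.TensorProduct.map (AlgHom.id k (aA k e)) Δ) v))) := by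
    intro v
    induction v using TensorProduct.induction_on with
    | zero => simp
    | tmul a b =>
      simp only [TensorProduct.map_tmul, LinearMap.mul'_apply, emb_apply,
        Algebra.TensorProduct.map_tmul, AlgHom.coe_id, id_eq,
        Algebra.TensorProduct.lid_tmul, Algebra.TensorProduct.rid_tmul, map_smul]
      rw [show lconv k e Δ θ.toLinearMap (emb k e g') b
          = LinearMap.mul' k L (TensorProduct.map θ.toLinearMap (emb k e g') (Δ b)) from rfl,
        h1 (Δ b), ← Algebra.smul_def]
    | add x y hx hy => simp only [map_add, hx, hy]
  apply LinearMap.ext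
  intro z
  rw [AlgHom.toLinearMap_apply, Psi_apply]
  exact h2 (Δ z)

end Aux6

section Aux7
set_option linter.unusedSectionVars false
variable {k : Type} [Field k] {A : Type} [Ring A] [Algebra k A] {n : ℕ} [NeZero n]
  {G : Type} [Group G]

lemma gOf_inv (e : Module.Basis (Fin n) k A) (he : e 0 = 1) (w : A ≃ₐ[k] A) (a i : Fin n) :
    (∑ u, gOf e he w.toAlgHom (xg k e a u) * gOf e he w.symm.toAlgHom (xg k e u i))
      = if a = i then 1 else 0 := by
  simp only [gOf_xg]
  have h : (∑ u, e.repr (w.toAlgHom (e u)) a * e.repr (w.symm.toAlgHom (e i)) u)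
      = e.repr (w.toAlgHom (w.symm.toAlgHom (e i))) a := by
    conv_rhs => rw [← Module.Basis.sum_repr e (w.symm.toAlgHom (e i))]
    rw [map_sum, map_sum]
    simp [map_sum, map_smul, Finset.sum_apply', smul_eq_mul, mul_comm]
  rw [h]
  simp [Module.Basis.repr_self_apply, Finsupp.single_apply, eq_comm]

lemma p_homog (e : Module.Basis (Fin n) k A) (Δ : aA k e →ₐ[k] aA k e ⊗[k] aA k e)
    (hΔ : ∀ i j, Δ (xg k e i j) = ∑ s, xg k e i s ⊗ₜ[k] xg k e s j)
    (θ : aA k e →ₐ[k] MonoidAlgebra k G)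
    (hc : ∀ z, TensorProduct.map θ.toLinearMap θ.toLinearMap (Δ z) = gComul k G (θ z))
    (i : Fin n) (σ : G) :
    TensorProduct.map LinearMap.id θ.toLinearMap
        (etaA k e (∑ s, (θ (xg k e s i)).coeff σ • e s))
      = (∑ s, (θ (xg k e s i)).coeff σ • e s) ⊗ₜ[k] MonoidAlgebra.of k G σ := by
  rw [mem_grading_iff]
  intro t
  have hrepr : ∀ j, e.repr (∑ s, (θ (xg k e s i)).coeff σ • e s) j = (θ (xg k e j i)).coeff σ := by
    intro j
    simp [map_sum, map_smul, Finset.sum_apply', Finsupp.smul_apply, smul_eq_mul,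
      Module.Basis.repr_self_apply, Finsupp.single_apply, mul_ite, mul_one, mul_zero,
      Finset.sum_ite_eq, Finset.sum_ite_eq']
  simp only [hrepr]
  exact theta_pointwise e Δ hΔ θ hc t i σ

lemma key_identity (e : Module.Basis (Fin n) k A) (he : e 0 = 1)
    (Δ : aA k e →ₐ[k] aA k e ⊗[k] aA k e)
    (hΔ : ∀ i j, Δ (xg k e i j) = ∑ s, xg k e i s ⊗ₜ[k] xg k e s j)
    (ε : aA k e →ₐ[k] k) (hε : ∀ i j, ε (xg k e i j) = if i = j then 1 else 0)
    (θ₁ θ₂ : aA k e →ₐ[k] MonoidAlgebra k G)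
    (hc₁ : ∀ z, TensorProduct.map θ₁.toLinearMap θ₁.toLinearMap (Δ z) = gComul k G (θ₁ z))
    (hu₁ : ∀ z, gCounit k G (θ₁ z) = ε z)
    (w : A ≃ₐ[k] A)
    (hw : ∀ (σ : G) (x : A),
        TensorProduct.map LinearMap.id θ₁.toLinearMap (etaA k e x)
          = x ⊗ₜ[k] MonoidAlgebra.of k G σ →
        TensorProduct.map LinearMap.id θ₂.toLinearMap (etaA k e (w x))
          = w x ⊗ₜ[k] MonoidAlgebra.of k G σ)
    (u i : Fin n) :
    (∑ t, e.repr (w (e i)) t • θ₂ (xg k e u t))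
      = ∑ s, e.repr (w (e s)) u • θ₁ (xg k e s i) := by
  classical
  have comp : ∀ σ : G,
      (∑ j, e.repr (w (∑ s, (θ₁ (xg k e s i)).coeff σ • e s)) j • θ₂ (xg k e u j))
        = e.repr (w (∑ s, (θ₁ (xg k e s i)).coeff σ • e s)) u • MonoidAlgebra.of k G σ := by
    intro σ
    have h := hw σ _ (p_homog e Δ hΔ θ₁ hc₁ i σ)
    rw [mem_grading_iff] at h
    exact h u
  have hreprw : ∀ (σ : G) (t : Fin n), e.repr (w (∑ s, (θ₁ (xg k e s i)).coeff σ • e s)) t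
      = ∑ s, (θ₁ (xg k e s i)).coeff σ * e.repr (w (e s)) t := by
    intro σ t
    simp [map_sum, map_smul, Finset.sum_apply', Finsupp.smul_apply, smul_eq_mul]
  set S : Finset G := Finset.univ.biUnion (fun s : Fin n => (θ₁ (xg k e s i)).coeff.support)
    with hS
  have hsub : ∀ s : Fin n, (θ₁ (xg k e s i)).coeff.support ⊆ S := by
    intro s
    rw [hS]
    exact Finset.subset_biUnion_of_mem (fun s : Fin n => (θ₁ (xg k e s i)).coeff.support)
      (Finset.mem_univ s)
  have hcount : ∀ s : Fin n, (∑ σ ∈ S, (θ₁ (xg k e s i)).coeff σ) = if s = i then 1 else 0 := by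
    intro s
    rw [counit_sum _ (hsub s), hu₁, hε]
  have total : (∑ σ ∈ S, ∑ j, e.repr (w (∑ s, (θ₁ (xg k e s i)).coeff σ • e s)) j
        • θ₂ (xg k e u j))
      = ∑ σ ∈ S, e.repr (w (∑ s, (θ₁ (xg k e s i)).coeff σ • e s)) u • MonoidAlgebra.of k G σ :=
    Finset.sum_congr rfl fun σ _ => comp σ
  have hL : (∑ σ ∈ S, ∑ j, e.repr (w (∑ s, (θ₁ (xg k e s i)).coeff σ • e s)) j
        • θ₂ (xg k e u j))
      = ∑ j, e.repr (w (e i)) j • θ₂ (xg k e u j) := by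
    simp only [hreprw]
    rw [Finset.sum_comm]
    refine Finset.sum_congr rfl fun j _ => ?_
    rw [← Finset.sum_smul]
    congr 1
    rw [Finset.sum_comm]
    have hterm : ∀ s, (∑ σ ∈ S, (θ₁ (xg k e s i)).coeff σ * e.repr (w (e s)) j)
        = (if s = i then 1 else 0) * e.repr (w (e s)) j := by
      intro s; rw [← Finset.sum_mul, hcount]
    simp only [hterm, ite_mul, one_mul, zero_mul]
    simp
  have hR : (∑ σ ∈ S, e.repr (w (∑ s, (θ₁ (xg k e s i)).coeff σ • e s)) u
        • MonoidAlgebra.of k G σ)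
      = ∑ s, e.repr (w (e s)) u • θ₁ (xg k e s i) := by
    simp only [hreprw, Finset.sum_smul]
    rw [Finset.sum_comm]
    refine Finset.sum_congr rfl fun s _ => ?_
    have hterm : ∀ σ, ((θ₁ (xg k e s i)).coeff σ * e.repr (w (e s)) u) • MonoidAlgebra.of k G σ
        = e.repr (w (e s)) u • ((θ₁ (xg k e s i)).coeff σ • MonoidAlgebra.of k G σ) := by
      intro σ; rw [smul_smul, mul_comm]
    simp only [hterm, ← Finset.smul_sum]
    rw [monoidAlgebra_decomp _ (hsub s)]
  rw [hL, hR] at total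
  exact total

lemma theta2_val (e : Module.Basis (Fin n) k A) (Δ : aA k e →ₐ[k] aA k e ⊗[k] aA k e)
    (hΔ : ∀ i j, Δ (xg k e i j) = ∑ s, xg k e i s ⊗ₜ[k] xg k e s j)
    {L : Type} [Ring L] [Algebra k L]
    (g g' : aA k e →ₐ[k] k) (θ θ₂ : aA k e →ₐ[k] L)
    (h3 : θ₂.toLinearMap
      = lconv k e Δ (emb k e g) (lconv k e Δ θ.toLinearMap (emb k e g')))
    (t i : Fin n) :
    θ₂ (xg k e t i)
      = ∑ u, ∑ v, (g (xg k e t u) * g' (xg k e v i)) • θ (xg k e u v) := by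
  have h := LinearMap.congr_fun h3 (xg k e t i)
  rw [AlgHom.toLinearMap_apply, lconv_xg e Δ hΔ] at h
  simp only [lconv_xg e Δ hΔ, emb_apply, AlgHom.toLinearMap_apply, Finset.mul_sum] at h
  rw [h]
  refine Finset.sum_congr rfl fun u _ => Finset.sum_congr rfl fun v _ => ?_
  rw [← Algebra.commutes (g' (xg k e v i)) (θ (xg k e u v)), ← mul_assoc, ← map_mul,
    ← Algebra.smul_def]

lemma quad_contract {M : Type} [AddCommMonoid M] [Module k M] (c d : Fin n → k)
    (gm g'm : Fin n → Fin n → k) (θv : Fin n → Fin n → M) (ofσ : M) (u : Fin n)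
    (hd : ∀ t, d t = ∑ s, gm t s * c s)
    (hinv : ∀ a j, (∑ t, g'm a t * gm t j) = if a = j then 1 else 0)
    (hcomp : ∀ s, (∑ j, c j • θv s j) = c s • ofσ) :
    (∑ t, d t • ∑ p, ∑ v, (gm u p * g'm v t) • θv p v) = d u • ofσ := by
  have hcontract : ∀ v, (∑ t, g'm v t * d t) = c v := by
    intro v
    simp only [hd, Finset.mul_sum]
    rw [Finset.sum_comm]
    have h1 : ∀ s, (∑ t, g'm v t * (gm t s * c s)) = (if v = s then 1 else 0) * c s := by
      intro s
      rw [← hinv v s, Finset.sum_mul]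
      exact Finset.sum_congr rfl fun t _ => by ring
    simp only [h1, ite_mul, one_mul, zero_mul]
    simp
  calc (∑ t, d t • ∑ p, ∑ v, (gm u p * g'm v t) • θv p v)
      = ∑ p, ∑ v, (∑ t, g'm v t * d t) • (gm u p • θv p v) := by
        simp only [Finset.smul_sum, smul_smul]
        rw [Finset.sum_comm]
        refine Finset.sum_congr rfl fun p _ => ?_
        rw [Finset.sum_comm]
        refine Finset.sum_congr rfl fun v _ => ?_
        rw [Finset.sum_mul, Finset.sum_smul]
        exact Finset.sum_congr rfl fun x _ => by congr 1; ring
    _ = ∑ p, gm u p • (∑ v, c v • θv p v) := by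
        simp only [hcontract, Finset.smul_sum, smul_smul]
        refine Finset.sum_congr rfl fun p _ => Finset.sum_congr rfl fun v _ => ?_
        congr 1
        ring
    _ = ∑ p, gm u p • (c p • ofσ) := by
        refine Finset.sum_congr rfl fun p _ => by rw [hcomp p]
    _ = (∑ p, gm u p * c p) • ofσ := by
        rw [Finset.sum_smul]
        exact Finset.sum_congr rfl fun p _ => by rw [smul_smul]
    _ = d u • ofσ := by rw [← hd]

lemma claimB_scalar {M : Type} [AddCommMonoid M] [Module k M]
    (gm g'm : Fin n → Fin n → k) (θ1v θ2v : Fin n → Fin n → M) (t i : Fin n)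
    (hkey : ∀ u v, (∑ p, gm p v • θ2v u p) = ∑ s, gm u s • θ1v s v)
    (hinv : ∀ a j, (∑ v, gm a v * g'm v j) = if a = j then 1 else 0) :
    (∑ u, ∑ v, (gm t u * g'm v i) • θ1v u v) = θ2v t i := by
  calc (∑ u, ∑ v, (gm t u * g'm v i) • θ1v u v)
      = ∑ v, g'm v i • (∑ u, gm t u • θ1v u v) := by
        rw [Finset.sum_comm]
        refine Finset.sum_congr rfl fun v _ => ?_
        rw [Finset.smul_sum]
        exact Finset.sum_congr rfl fun u _ => by rw [smul_smul, mul_comm]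
    _ = ∑ v, g'm v i • (∑ p, gm p v • θ2v t p) := by
        exact Finset.sum_congr rfl fun v _ => by rw [hkey t v]
    _ = ∑ p, (∑ v, gm p v * g'm v i) • θ2v t p := by
        simp only [Finset.smul_sum]
        rw [Finset.sum_comm]
        refine Finset.sum_congr rfl fun p _ => ?_
        rw [Finset.sum_smul]
        exact Finset.sum_congr rfl fun v _ => by rw [smul_smul, mul_comm]
    _ = θ2v t i := by
        simp only [hinv, ite_smul, one_smul, zero_smul]
        simp

lemma WOfL_repr (e : Module.Basis (Fin n) k A) (g : aA k e →ₐ[k] k) (x : A) (t : Fin n) :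
    e.repr (WOfL e g x) t = ∑ s, g (xg k e t s) * e.repr x s := by
  conv_lhs => rw [← Module.Basis.sum_repr e x]
  rw [map_sum]
  simp only [map_smul, WOfL_basis, map_sum, Finset.sum_apply', Finsupp.smul_apply,
    map_smul, smul_eq_mul, Module.Basis.repr_self_apply, mul_ite, mul_one, mul_zero,
    Finset.sum_ite_eq', Finset.mem_univ, if_true]
  exact Finset.sum_congr rfl fun s _ => by ring

end Aux7


/-- Two `G`-gradings `A^{(θ₁)}`, `A^{(θ₂)}` associated to bialgebra maps
`θ₁, θ₂ : a(A) → k[G]` are isomorphic if and only if there is an invertible group-like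
element `g` of `a(A)^o` with `θ₂ = g ⋆ θ₁ ⋆ g⁻¹` in the convolution algebra
`Hom(a(A), k[G])`. -/
theorem gradings_isomorphic_iff_conjugate
    (e : Module.Basis (Fin n) k A) (he : e 0 = 1)
    (Δ : aA k e →ₐ[k] aA k e ⊗[k] aA k e) (ε : aA k e →ₐ[k] k)
    (hΔ : ∀ i j, Δ (xg k e i j) = ∑ s, xg k e i s ⊗ₜ[k] xg k e s j)
    (hε : ∀ i j, ε (xg k e i j) = if i = j then 1 else 0)
    (G : Type) [Group G]
    (θ₁ θ₂ : aA k e →ₐ[k] MonoidAlgebra k G)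
    (hθ₁ : (∀ z, TensorProduct.map θ₁.toLinearMap θ₁.toLinearMap (Δ z) = gComul k G (θ₁ z)) ∧
      ∀ z, gCounit k G (θ₁ z) = ε z)
    (hθ₂ : (∀ z, TensorProduct.map θ₂.toLinearMap θ₂.toLinearMap (Δ z) = gComul k G (θ₂ z)) ∧
      ∀ z, gCounit k G (θ₂ z) = ε z) :
    -- the two gradings are isomorphic
    (∃ w : A ≃ₐ[k] A, ∀ (σ : G) (x : A),
        TensorProduct.map LinearMap.id θ₁.toLinearMap (etaA k e x) =
          x ⊗ₜ[k] MonoidAlgebra.of k G σ →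
        TensorProduct.map LinearMap.id θ₂.toLinearMap (etaA k e (w x)) =
          w x ⊗ₜ[k] MonoidAlgebra.of k G σ) ↔
    -- iff `θ₂ = g ⋆ θ₁ ⋆ g⁻¹` for an invertible group-like `g` of `a(A)^o`
    (∃ g g' : aA k e →ₐ[k] k, conv k e Δ g g' = ε ∧ conv k e Δ g' g = ε ∧
        θ₂.toLinearMap =
          lconv k e Δ (emb k e g) (lconv k e Δ θ₁.toLinearMap (emb k e g'))) := by
  constructor
  · rintro ⟨w, hw⟩
    refine ⟨gOf e he w.toAlgHom, gOf e he w.symm.toAlgHom, ?_, ?_, ?_⟩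
    · apply aA_algHom_ext e
      intro a i
      rw [conv_xg e Δ hΔ, gOf_inv e he w a i, hε]
    · apply aA_algHom_ext e
      intro a i
      have h2 := gOf_inv e he w.symm a i
      rw [AlgEquiv.symm_symm] at h2
      rw [conv_xg e Δ hΔ, hε, h2]
    · rw [claimA e Δ _ _ θ₁]
      refine congrArg AlgHom.toLinearMap (aA_algHom_ext e fun t i => ?_)
      rw [Psi_xg e Δ hΔ]
      refine (claimB_scalar (fun t i => gOf e he w.toAlgHom (xg k e t i))
        (fun v i => gOf e he w.symm.toAlgHom (xg k e v i))
        (fun u v => θ₁ (xg k e u v)) (fun u t => θ₂ (xg k e u t)) t i ?_ ?_).symm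
      · intro u v
        have h := key_identity e he Δ hΔ ε hε θ₁ θ₂ hθ₁.1 hθ₁.2 w hw u v
        simpa only [gOf_xg, AlgEquiv.toAlgHom_eq_coe, AlgHom.coe_coe, AlgEquiv.coe_toAlgHom] using h
      · intro a j
        exact gOf_inv e he w a j
  · rintro ⟨g, g', h1, h2, h3⟩
    have hgg' : ∀ a i, (∑ u, g (xg k e a u) * g' (xg k e u i)) = if a = i then 1 else 0 := by
      intro a i
      have hh := DFunLike.congr_fun h1 (xg k e a i)
      rwa [conv_xg e Δ hΔ, hε] at hh
    have hg'g : ∀ a i, (∑ u, g' (xg k e a u) * g (xg k e u i)) = if a = i then 1 else 0 := by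
      intro a i
      have hh := DFunLike.congr_fun h2 (xg k e a i)
      rwa [conv_xg e Δ hΔ, hε] at hh
    have hWW' : (WOf e he g).comp (WOf e he g') = AlgHom.id k A := by
      apply AlgHom.ext
      intro x
      simpa only [AlgHom.comp_apply, AlgHom.id_apply, WOf_apply]
        using WOfL_comp e g g' hgg' x
    have hW'W : (WOf e he g').comp (WOf e he g) = AlgHom.id k A := by
      apply AlgHom.ext
      intro x
      simpa only [AlgHom.comp_apply, AlgHom.id_apply, WOf_apply]
        using WOfL_comp e g' g hg'g x
    refine ⟨AlgEquiv.ofAlgHom (WOf e he g) (WOf e he g') hWW' hW'W, ?_⟩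
    intro σ x hx
    rw [mem_grading_iff] at hx ⊢
    intro u
    have hcoe : (AlgEquiv.ofAlgHom (WOf e he g) (WOf e he g') hWW' hW'W) x
        = WOfL e g x := rfl
    rw [hcoe]
    have hval := theta2_val e Δ hΔ g g' θ₁ θ₂ h3
    simp only [WOfL_repr e g x, hval]
    exact quad_contract (fun s => e.repr x s)
      (fun t => ∑ s, g (xg k e t s) * e.repr x s)
      (fun t s => g (xg k e t s)) (fun v t => g' (xg k e v t))
      (fun p v => θ₁ (xg k e p v)) (MonoidAlgebra.of k G σ) u
      (fun t => rfl) hg'g hx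

end
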